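/- arXiv:2105.01461 — 2 statements merged into one kernel-verified Lean document; each statement's English description precedes it below -/
import Mathlib

section
/- In the real Lie algebra su(n+1) of trace-free skew-Hermitian (n+1)×(n+1) complex matrices (n ≥ 2), let 𝔨 = {M ∈ su(n+1) : M_{1k} = M_{k1} = 0 for all k ≥ 2} and X = (1/2)(E₁₂ − E₂₁). Then {M ∈ 𝔨 : ⁅X, M⁆ = 0} = {M ∈ su(n+1) : M₁₁ = M₂₂ and M_{jk} = 0 whenever j ≠ k and at least one of j, k lies in {1, 2}}. -/
/-!
With `E = E₁₂ - E₂₁`, the `(a, b)` entry of `⁅E, M⁆` is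
`δ_{a1} M_{2b} - δ_{a2} M_{1b} - δ_{b2} M_{a1} + δ_{b1} M_{a2}`.
If the first row and column of `M` vanish off the diagonal (that is, `M ∈ 𝔨`), the first row of
`⁅E, M⁆` consists of `M₂₂ - M₁₁` and the off-diagonal entries of the second row of `M`, and its
first column of the off-diagonal entries of the second column. Hence `⁅E, M⁆ = 0` exactly when
`M₁₁ = M₂₂` and the second row and column of `M` vanish off the diagonal as well.
-/

open Matrix

theorem Fin.val_lt_two_iff {n : ℕ} (p : Fin (n + 2)) : (p : ℕ) < 2 ↔ p = 0 ∨ p = 1 := by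
  rw [Fin.ext_iff, Fin.ext_iff, Fin.val_zero, Fin.val_one]
  omega

namespace Matrix

variable {ι R : Type*}

def BlockDiagonalAt [Zero R] (M : Matrix ι ι R) (p : ι) : Prop :=
  ∀ j, j ≠ p → M p j = 0 ∧ M j p = 0

theorem forall_offDiag_eq_zero_iff [Zero R] {M : Matrix ι ι R} (P : ι → Prop) :
    (∀ j l, j ≠ l → (P j ∨ P l) → M j l = 0) ↔ ∀ p, P p → M.BlockDiagonalAt p := by
  constructor
  · intro h p hp j hj
    exact ⟨h p j (Ne.symm hj) (.inl hp), h j p hj (.inr hp)⟩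
  · rintro h j l hjl (hj | hl)
    · exact (h j hj l (Ne.symm hjl)).1
    · exact (h l hl j hjl).2

variable [DecidableEq ι]

section Zero

variable [Zero R] {M : Matrix ι ι R} {p : ι}

theorem BlockDiagonalAt.row_eq (hM : M.BlockDiagonalAt p) (j : ι) :
    M p j = if j = p then M p p else 0 := by
  split_ifs with h
  · rw [h]
  · exact (hM j h).1

theorem BlockDiagonalAt.col_eq (hM : M.BlockDiagonalAt p) (j : ι) :
    M j p = if j = p then M p p else 0 := by
  split_ifs with h
  · rw [h]
  · exact (hM j h).2

end Zero

variable [Fintype ι] [Ring R]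

theorem single_one_mul_apply (i j a b : ι) (M : Matrix ι ι R) :
    (single i j (1 : R) * M) a b = if a = i then M j b else 0 := by
  by_cases h : a = i
  · subst h; simp
  · simp [h]

theorem mul_single_one_apply (i j a b : ι) (M : Matrix ι ι R) :
    (M * single i j (1 : R)) a b = if b = j then M a i else 0 := by
  by_cases h : b = j
  · subst h; simp
  · simp [h]

theorem lie_single_sub_single_apply (p q a b : ι) (M : Matrix ι ι R) :
    ⁅single p q (1 : R) - single q p 1, M⁆ a b
      = (if a = p then M q b else 0) - (if a = q then M p b else 0)
        - (if b = q then M a p else 0) + (if b = p then M a q else 0) := by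
  simp only [Ring.lie_def, sub_apply, sub_mul, mul_sub, single_one_mul_apply,
    mul_single_one_apply]
  abel

theorem lie_single_sub_single_eq_zero_iff {p q : ι} (hpq : p ≠ q) {M : Matrix ι ι R}
    (hM : M.BlockDiagonalAt p) :
    ⁅single p q (1 : R) - single q p 1, M⁆ = 0 ↔ M p p = M q q ∧ M.BlockDiagonalAt q := by
  have entry := fun a b => lie_single_sub_single_apply p q a b M
  constructor
  · intro h
    have hzero a b := (entry a b).symm.trans (congrFun₂ h a b)
    refine ⟨?_, fun j hj => ⟨?_, ?_⟩⟩
    · simpa [hpq, hpq.symm, sub_eq_zero, eq_comm] using hzero p q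
    · by_cases hjp : j = p
      · exact hjp ▸ (hM q hpq.symm).2
      · simpa [hpq, hjp, hj] using hzero p j
    · by_cases hjp : j = p
      · exact hjp ▸ (hM q hpq.symm).1
      · simpa [hpq, hjp, hj] using hzero j p
  · rintro ⟨hpp, hq⟩
    ext a b
    rw [entry, hq.row_eq b, hM.row_eq b, hM.col_eq a, hq.col_eq a, hpp, zero_apply]
    by_cases hap : a = p <;> by_cases haq : a = q <;> by_cases hbp : b = p <;>
      by_cases hbq : b = q <;> simp_all

end Matrix

/-- Case 2 of Section 3.2 / equation (4.27): the centralizer of `X = (1/2)(E₁₂ − E₂₁)`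
in the isotropy algebra `𝔨 = 𝔰(𝔲(1) ⊕ 𝔲(n)) ⊂ su(n+1)` consists of the matrices in
`su(n+1)` with equal first two diagonal entries and vanishing off-diagonal entries in
the first two rows and columns. -/
theorem stmt_9 (n : ℕ) (hn : 2 ≤ n)
    (su k : Set (Matrix (Fin (n+1)) (Fin (n+1)) ℂ))
    (hsu : su = {M | Mᴴ = -M ∧ M.trace = 0})
    (hk : k = {M | M ∈ su ∧ ∀ j : Fin (n+1), 1 ≤ (j : ℕ) → M 0 j = 0 ∧ M j 0 = 0})
    (X : Matrix (Fin (n+1)) (Fin (n+1)) ℂ)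
    (hX : X = (1/2 : ℂ) • (Matrix.single 0 1 1 - Matrix.single 1 0 1)) :
    {M | M ∈ k ∧ ⁅X, M⁆ = 0}
      = {M | M ∈ su ∧ M 0 0 = M 1 1 ∧
          ∀ j l : Fin (n+1), j ≠ l → ((j : ℕ) < 2 ∨ (l : ℕ) < 2) → M j l = 0} := by
  obtain ⟨m, rfl⟩ : ∃ m, n = m + 1 := ⟨n - 1, by omega⟩
  subst hsu hk
  set E : Matrix (Fin (m + 1 + 1)) (Fin (m + 1 + 1)) ℂ := single 0 1 1 - single 1 0 1
  ext M
  have hk_iff :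
      (∀ j : Fin (m + 1 + 1), 1 ≤ (j : ℕ) → M 0 j = 0 ∧ M j 0 = 0) ↔ M.BlockDiagonalAt 0 :=
    forall_congr' fun j => by rw [Nat.one_le_iff_ne_zero, Fin.val_ne_zero_iff]
  have hX_iff : ⁅X, M⁆ = 0 ↔ ⁅E, M⁆ = 0 := by
    rw [hX, Ring.lie_def, smul_mul_assoc, mul_smul_comm, ← smul_sub, ← Ring.lie_def, smul_eq_zero]
    norm_num
  simp only [Set.mem_ofPred_eq]
  rw [hk_iff, hX_iff, forall_offDiag_eq_zero_iff (fun j : Fin (m + 1 + 1) => (j : ℕ) < 2)]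
  simp only [Fin.val_lt_two_iff, or_imp, forall_and, forall_eq]
  have hE_iff (h0 : M.BlockDiagonalAt 0) :=
    lie_single_sub_single_eq_zero_iff (Fin.zero_ne_one : (0 : Fin (m + 1 + 1)) ≠ 1) h0
  constructor
  · rintro ⟨⟨hM, h0⟩, hlie⟩
    obtain ⟨hpp, h1⟩ := (hE_iff h0).1 hlie
    exact ⟨hM, hpp, h0, h1⟩
  · rintro ⟨hM, hpp, h0, h1⟩
    exact ⟨⟨hM, h0⟩, (hE_iff h0).2 ⟨hpp, h1⟩⟩
end

section
/- Let L be a real Lie algebra and let X, u, v, a, w ∈ L satisfy ⁅X, ⁅X, u⁆⁆ = −(1/4)u, ⁅X, ⁅X, v⁆⁆ = −(1/4)v, ⁅u, v⁆ = a + w, ⁅X, a⁆ = 0, and ⁅X, ⁅X, w⁆⁆ = −w. Then 4·⁅⁅X, u⁆, ⁅X, v⁆⁆ = a − w. -/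
/-- Equation (sorpresa) in the proof of Theorem 1.1: if `ad_X² = −1/4` on `u, v`,
`⁅u, v⁆ = a + w` with `⁅X, a⁆ = 0` and `ad_X² w = −w`, then
`4⁅⁅X,u⁆, ⁅X,v⁆⁆ = a − w`. -/
theorem stmt_14 {L : Type*} [LieRing L] [LieAlgebra ℝ L]
    (X u v a w : L)
    (hu : ⁅X, ⁅X, u⁆⁆ = -((1/4 : ℝ) • u)) (hv : ⁅X, ⁅X, v⁆⁆ = -((1/4 : ℝ) • v))
    (huv : ⁅u, v⁆ = a + w) (ha : ⁅X, a⁆ = 0) (hw : ⁅X, ⁅X, w⁆⁆ = -w) :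
    (4 : ℝ) • ⁅⁅X, u⁆, ⁅X, v⁆⁆ = a - w := by
  have h1 : ⁅X, ⁅X, ⁅u, v⁆⁆⁆ = -w := by
    rw [huv, lie_add, ha, zero_add, hw]
  have h2 : ⁅X, ⁅X, ⁅u, v⁆⁆⁆ =
      ⁅⁅X, ⁅X, u⁆⁆, v⁆ + (2 : ℝ) • ⁅⁅X, u⁆, ⁅X, v⁆⁆ + ⁅u, ⁅X, ⁅X, v⁆⁆⁆ := by
    rw [leibniz_lie X u v, lie_add, leibniz_lie X ⁅X, u⁆ v, leibniz_lie X u ⁅X, v⁆]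
    module
  rw [h2, hu, hv] at h1
  rw [neg_lie, lie_neg, smul_lie, lie_smul, huv] at h1
  linear_combination (norm := module) (2:ℝ) • h1
end
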